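/- Assume μ₁ ≥ μ₂. Fix k, ℓ with k + ℓ = C₁ and k ≥ 1, and assume either ℓ ≥ C₂, or both μ₁ > μ₂ and ℓ < C₂. Then there exists a natural number N such that for all i ≥ 0, D(i,k,ℓ) ≤ 0 if and only if i ≥ N; moreover there exists a natural number I such that D(i,k,ℓ) < 0 for all i ≥ I. -/

import Mathlib

/-- Overall service rate `d(k,ℓ) = k·μ₁ + min(ℓ,C₂)·μ₂`. -/
noncomputable def dRate (C₂ : ℕ) (μ₁ μ₂ : ℝ) (k ℓ : ℕ) : ℝ :=
  (k : ℝ) * μ₁ + ((min ℓ C₂ : ℕ) : ℝ) * μ₂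

/-- Membership of `(i,k,ℓ)` in the state space `X`. -/
def memX (C₁ : ℕ) (i k ℓ : ℕ) : Prop :=
  (i = 0 ∧ k + ℓ < C₁) ∨ k + ℓ = C₁

/-- `v` satisfies the optimality (Bellman) equations of the clearing system.
Terms whose coefficient `k·μ₁` or `min(ℓ,C₂)·μ₂` vanishes contribute `0`,
matching the convention that such summands are omitted. -/
def IsValue (C₁ C₂ : ℕ) (μ₁ μ₂ h₀ h₁ h₂ : ℝ) (v : ℕ → ℕ → ℕ → ℝ) : Prop :=
  v 0 0 0 = 0 ∧
  (∀ k ℓ : ℕ, k + ℓ ≤ C₁ → ¬(k = 0 ∧ ℓ = 0) →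
    v 0 k ℓ = ((k : ℝ) * h₁ + (ℓ : ℝ) * h₂) / dRate C₂ μ₁ μ₂ k ℓ
      + ((k : ℝ) * μ₁ / dRate C₂ μ₁ μ₂ k ℓ) * v 0 (k - 1) ℓ
      + (((min ℓ C₂ : ℕ) : ℝ) * μ₂ / dRate C₂ μ₁ μ₂ k ℓ) * v 0 k (ℓ - 1)) ∧
  (∀ i k ℓ : ℕ, k + ℓ = C₁ →
    v (i + 1) k ℓ =
      (((i : ℝ) + 1) * h₀ + (k : ℝ) * h₁ + (ℓ : ℝ) * h₂) / dRate C₂ μ₁ μ₂ k ℓ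
      + ((k : ℝ) * μ₁ / dRate C₂ μ₁ μ₂ k ℓ) *
          min (v i k ℓ) (v i (k - 1) (ℓ + 1))
      + (((min ℓ C₂ : ℕ) : ℝ) * μ₂ / dRate C₂ μ₁ μ₂ k ℓ) *
          min (v i (k + 1) (ℓ - 1)) (v i k ℓ))

/-- The difference `D(i,k,ℓ) = v(i,k,ℓ) − v(i,k−1,ℓ+1)`. -/
noncomputable def Dv (v : ℕ → ℕ → ℕ → ℝ) (i k ℓ : ℕ) : ℝ :=
  v i k ℓ - v i (k - 1) (ℓ + 1)

/-!
Write `w i j = v i j (C₁ - j)` for the values on the diagonal. At level zero the Bellman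
equations have the closed-form solution `v 0 k ℓ = k h₁ / μ₁ + Σ_{m=1}^{ℓ} m h₂ / (min m C₂ μ₂)`.
The increments `w (i + 1) j - w i j` are antitone in `j`, by induction on `i`: for `i = 0` and
for the inductive step alike they have the form `h₀ / d j + p j g j + q j g (j + 1)` with
`p + q = 1`, `g` antitone and the total rate `d` nondecreasing along the diagonal (this is where
`μ₂ ≤ μ₁` enters). Hence `D i j = w i j - w i (j - 1)` is antitone in `i`, and `{i | D i k ≤ 0}`
is a final segment of `ℕ`. Once `D i (j - 1) ≤ 0`, the Bellman equation bounds `D (i + 1) j` by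
`(i + 1) h₀ (1 / d j - 1 / d (j - 1)) + const`, and `d (j - 1) < d j` under the case hypothesis,
so by induction on `j ≤ k` every `D i j` is eventually negative.
-/

section MinIncrement

variable {α : Type*} [AddCommGroup α] [LinearOrder α] [IsOrderedAddMonoid α] {a b a' b' : α}

theorem sub_le_min_sub_min (h : a' - a ≤ b' - b) : a' - a ≤ min a' b' - min a b := by
  rw [le_sub_iff_add_le, ← min_add_add_left]
  exact min_le_min (by rw [sub_add_cancel]) (le_sub_iff_add_le.mp h)

theorem min_sub_min_le_sub (h : a' - a ≤ b' - b) : min a' b' - min a b ≤ b' - b := by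
  rw [sub_le_iff_le_add, ← min_add_add_left]
  exact min_le_min (sub_le_iff_le_add.mp h) (by rw [sub_add_cancel])

end MinIncrement

theorem exists_forall_iff_le_of_monotone {P : ℕ → Prop} (hP : Monotone P) (h : ∃ n, P n) :
    ∃ N, ∀ n, P n ↔ N ≤ n := by
  classical
  exact ⟨Nat.find h, fun n => ⟨fun hn => Nat.find_le hn, fun hn => hP hn (Nat.find_spec h)⟩⟩

theorem succ_le_of_eq_div_add_combo {C : ℕ} {c : ℝ} {d p q g u : ℕ → ℝ} (hc : 0 ≤ c)
    (hd : ∀ j, 0 < d j) (hd_mono : ∀ j < C, d j ≤ d (j + 1))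
    (hp : ∀ j, 0 ≤ p j) (hq : ∀ j, 0 ≤ q j) (hpq : ∀ j, p j + q j = 1) (hqC : q C = 0)
    (hg : ∀ j < C, g (j + 1) ≤ g j)
    (hu : ∀ j ≤ C, u j = c / d j + p j * g j + q j * g (j + 1)) :
    ∀ j < C, u (j + 1) ≤ u j := by
  intro j hj
  have upper : p (j + 1) * g (j + 1) + q (j + 1) * g (j + 2) ≤ g (j + 1) := by
    rcases (Nat.succ_le_of_lt hj).lt_or_eq with hlt | hlast
    · simpa [max_eq_left (hg _ hlt)] using
        Convex.combo_le_max (g (j + 1)) (g (j + 2)) (hp _) (hq _) (hpq _)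
    · subst hlast
      simp [hqC, show p (j + 1) = 1 by linarith [hpq (j + 1)]]
  have lower : g (j + 1) ≤ p j * g j + q j * g (j + 1) := by
    simpa [min_eq_right (hg _ hj)] using
      Convex.min_le_combo (g j) (g (j + 1)) (hp _) (hq _) (hpq _)
  have := div_le_div_of_nonneg_left hc (hd j) (hd_mono j hj)
  rw [hu j hj.le, hu (j + 1) hj]
  linarith

section Rates

variable {C₁ C₂ : ℕ} {μ₁ μ₂ : ℝ}

theorem dRate_pos (hC₂ : 1 ≤ C₂) (hμ₁ : 0 < μ₁) (hμ₂ : 0 < μ₂) {k ℓ : ℕ}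
    (h : ¬(k = 0 ∧ ℓ = 0)) : 0 < dRate C₂ μ₁ μ₂ k ℓ := by
  unfold dRate
  rcases Nat.eq_zero_or_pos k with rfl | hk
  · have : (0 : ℝ) < (min ℓ C₂ : ℕ) := by exact_mod_cast (by omega : 0 < min ℓ C₂)
    simpa using mul_pos this hμ₂
  · exact add_pos_of_pos_of_nonneg (mul_pos (by exact_mod_cast hk) hμ₁) (by positivity)

variable (C₁ C₂ μ₁ μ₂)

-- States `(i, j, C₁ - j)` of the diagonal `k + ℓ = C₁` are indexed by `j`.
noncomputable def diagRate (j : ℕ) : ℝ := dRate C₂ μ₁ μ₂ j (C₁ - j)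

noncomputable def diagProb₁ (j : ℕ) : ℝ := (j : ℝ) * μ₁ / diagRate C₁ C₂ μ₁ μ₂ j

noncomputable def diagProb₂ (j : ℕ) : ℝ :=
  ((min (C₁ - j) C₂ : ℕ) : ℝ) * μ₂ / diagRate C₁ C₂ μ₁ μ₂ j

variable {C₁ C₂ μ₁ μ₂}

theorem diagRate_pos (hC₁ : 1 ≤ C₁) (hC₂ : 1 ≤ C₂) (hμ₁ : 0 < μ₁) (hμ₂ : 0 < μ₂) (j : ℕ) :
    0 < diagRate C₁ C₂ μ₁ μ₂ j :=
  dRate_pos hC₂ hμ₁ hμ₂ (by omega)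

theorem diagRate_le_succ (hμ₁ : 0 ≤ μ₁) (hμ : μ₂ ≤ μ₁) (j : ℕ) :
    diagRate C₁ C₂ μ₁ μ₂ j ≤ diagRate C₁ C₂ μ₁ μ₂ (j + 1) := by
  unfold diagRate dRate
  rcases (by omega : min (C₁ - j) C₂ = min (C₁ - (j + 1)) C₂ ∨
      min (C₁ - j) C₂ = min (C₁ - (j + 1)) C₂ + 1) with h | h <;>
    · rw [h]; push_cast; linarith

theorem diagRate_lt_succ (hμ₁ : 0 < μ₁) {j : ℕ} (h : C₂ + j + 1 ≤ C₁ ∨ μ₂ < μ₁) :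
    diagRate C₁ C₂ μ₁ μ₂ j < diagRate C₁ C₂ μ₁ μ₂ (j + 1) := by
  unfold diagRate dRate
  rcases h with h | h
  · rw [show min (C₁ - j) C₂ = min (C₁ - (j + 1)) C₂ by omega]; push_cast; linarith
  · rcases (by omega : min (C₁ - j) C₂ = min (C₁ - (j + 1)) C₂ ∨
        min (C₁ - j) C₂ = min (C₁ - (j + 1)) C₂ + 1) with h' | h' <;>
      · rw [h']; push_cast; linarith

theorem diagProb₁_nonneg (hμ₁ : 0 ≤ μ₁) (hμ₂ : 0 ≤ μ₂) (j : ℕ) : 0 ≤ diagProb₁ C₁ C₂ μ₁ μ₂ j := by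
  unfold diagProb₁ diagRate dRate; positivity

theorem diagProb₂_nonneg (hμ₁ : 0 ≤ μ₁) (hμ₂ : 0 ≤ μ₂) (j : ℕ) : 0 ≤ diagProb₂ C₁ C₂ μ₁ μ₂ j := by
  unfold diagProb₂ diagRate dRate; positivity

theorem diagProb₁_add_diagProb₂ (hC₁ : 1 ≤ C₁) (hC₂ : 1 ≤ C₂) (hμ₁ : 0 < μ₁) (hμ₂ : 0 < μ₂)
    (j : ℕ) : diagProb₁ C₁ C₂ μ₁ μ₂ j + diagProb₂ C₁ C₂ μ₁ μ₂ j = 1 := by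
  rw [diagProb₁, diagProb₂, ← add_div]
  exact div_self (diagRate_pos hC₁ hC₂ hμ₁ hμ₂ j).ne'

theorem diagProb₂_self : diagProb₂ C₁ C₂ μ₁ μ₂ C₁ = 0 := by
  simp [diagProb₂]

end Rates

section ClearingCost

variable (C₂ : ℕ) (μ₂ h₂ : ℝ)

noncomputable def stageCost₂ (m : ℕ) : ℝ := m * h₂ / ((min m C₂ : ℕ) * μ₂)

noncomputable def clearCost₂ (ℓ : ℕ) : ℝ := ∑ m ∈ Finset.range ℓ, stageCost₂ C₂ μ₂ h₂ (m + 1)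

variable {C₂ μ₂ h₂}

theorem clearCost₂_succ (ℓ : ℕ) :
    clearCost₂ C₂ μ₂ h₂ (ℓ + 1) = clearCost₂ C₂ μ₂ h₂ ℓ + stageCost₂ C₂ μ₂ h₂ (ℓ + 1) :=
  Finset.sum_range_succ _ _

theorem stageCost₂_nonneg (hμ₂ : 0 ≤ μ₂) (hh₂ : 0 ≤ h₂) (m : ℕ) : 0 ≤ stageCost₂ C₂ μ₂ h₂ m := by
  unfold stageCost₂; positivity

theorem stageCost₂_mono (hC₂ : 1 ≤ C₂) (hμ₂ : 0 < μ₂) (hh₂ : 0 ≤ h₂) :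
    Monotone (stageCost₂ C₂ μ₂ h₂) := by
  intro m m' hmm
  rcases Nat.eq_zero_or_pos m with rfl | hm
  · simpa [stageCost₂] using stageCost₂_nonneg hμ₂.le hh₂ m'
  have hcross : m * min m' C₂ ≤ m' * min m C₂ := by
    rcases le_total m' C₂ with h | h <;> rcases le_total m C₂ with h' | h' <;>
      simp only [min_eq_left, min_eq_right, *] <;> nlinarith
  have hmin : ∀ n, 1 ≤ n → (0 : ℝ) < (min n C₂ : ℕ) := fun n hn => by
    exact_mod_cast (by omega : 0 < min n C₂)
  unfold stageCost₂
  rw [div_le_div_iff₀ (mul_pos (hmin m hm) hμ₂) (mul_pos (hmin m' (by omega)) hμ₂)]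
  have : (m : ℝ) * (min m' C₂ : ℕ) ≤ m' * (min m C₂ : ℕ) := by exact_mod_cast hcross
  nlinarith [mul_le_mul_of_nonneg_right this (mul_nonneg hh₂ hμ₂.le)]

theorem min_mul_stageCost₂ (hC₂ : 1 ≤ C₂) (hμ₂ : 0 < μ₂) (m : ℕ) :
    ((min m C₂ : ℕ) : ℝ) * μ₂ * stageCost₂ C₂ μ₂ h₂ m = m * h₂ := by
  rcases Nat.eq_zero_or_pos m with rfl | hm
  · simp
  · have : (0 : ℝ) < (min m C₂ : ℕ) := by exact_mod_cast (by omega : 0 < min m C₂)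
    unfold stageCost₂; field_simp

end ClearingCost

section LevelZero

variable {C₁ C₂ : ℕ} {μ₁ μ₂ h₀ h₁ h₂ : ℝ} {v : ℕ → ℕ → ℕ → ℝ}

theorem clearCost₂_bellman (hC₂ : 1 ≤ C₂) (hμ₁ : 0 < μ₁) (hμ₂ : 0 < μ₂) {k ℓ : ℕ}
    (h : ¬(k = 0 ∧ ℓ = 0)) :
    k * (h₁ / μ₁) + clearCost₂ C₂ μ₂ h₂ ℓ =
      ((k : ℝ) * h₁ + (ℓ : ℝ) * h₂) / dRate C₂ μ₁ μ₂ k ℓ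
      + ((k : ℝ) * μ₁ / dRate C₂ μ₁ μ₂ k ℓ) * ((k - 1 : ℕ) * (h₁ / μ₁) + clearCost₂ C₂ μ₂ h₂ ℓ)
      + (((min ℓ C₂ : ℕ) : ℝ) * μ₂ / dRate C₂ μ₁ μ₂ k ℓ) *
          (k * (h₁ / μ₁) + clearCost₂ C₂ μ₂ h₂ (ℓ - 1)) := by
  have hd := dRate_pos hC₂ hμ₁ hμ₂ h
  have hk : (k : ℝ) * μ₁ * ((k - 1 : ℕ) * (h₁ / μ₁)) = k * μ₁ * (k * (h₁ / μ₁)) - k * h₁ := by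
    rcases k with _ | k
    · simp
    · push_cast; field_simp; ring
  have hℓ : ((min ℓ C₂ : ℕ) : ℝ) * μ₂ * clearCost₂ C₂ μ₂ h₂ (ℓ - 1)
      = (min ℓ C₂ : ℕ) * μ₂ * clearCost₂ C₂ μ₂ h₂ ℓ - ℓ * h₂ := by
    rcases ℓ with _ | ℓ
    · simp
    · rw [Nat.add_sub_cancel, clearCost₂_succ, mul_add, min_mul_stageCost₂ hC₂ hμ₂]
      ring
  rw [div_mul_eq_mul_div, div_mul_eq_mul_div, mul_add, mul_add, hk, hℓ, ← add_div, ← add_div,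
    eq_div_iff hd.ne']
  unfold dRate
  ring

theorem IsValue.zero_eq_clearCost₂ (hv : IsValue C₁ C₂ μ₁ μ₂ h₀ h₁ h₂ v) (hC₂ : 1 ≤ C₂)
    (hμ₁ : 0 < μ₁) (hμ₂ : 0 < μ₂) {k ℓ : ℕ} (h : k + ℓ ≤ C₁) :
    v 0 k ℓ = k * (h₁ / μ₁) + clearCost₂ C₂ μ₂ h₂ ℓ := by
  induction hn : k + ℓ generalizing k ℓ with
  | zero =>
    obtain ⟨rfl, rfl⟩ : k = 0 ∧ ℓ = 0 := by omega
    simpa [clearCost₂] using hv.1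
  | succ n ih =>
    have hkℓ : ¬(k = 0 ∧ ℓ = 0) := by omega
    have h₁' : ((k : ℝ) * μ₁ / dRate C₂ μ₁ μ₂ k ℓ) * v 0 (k - 1) ℓ
        = ((k : ℝ) * μ₁ / dRate C₂ μ₁ μ₂ k ℓ) *
          ((k - 1 : ℕ) * (h₁ / μ₁) + clearCost₂ C₂ μ₂ h₂ ℓ) := by
      rcases k with _ | k
      · simp
      · rw [ih (by omega) (by omega)]
    have h₂' : (((min ℓ C₂ : ℕ) : ℝ) * μ₂ / dRate C₂ μ₁ μ₂ k ℓ) * v 0 k (ℓ - 1)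
        = (((min ℓ C₂ : ℕ) : ℝ) * μ₂ / dRate C₂ μ₁ μ₂ k ℓ) *
          (k * (h₁ / μ₁) + clearCost₂ C₂ μ₂ h₂ (ℓ - 1)) := by
      rcases ℓ with _ | ℓ
      · simp
      · rw [ih (by omega) (by omega)]
    rw [hv.2.1 k ℓ h hkℓ, h₁', h₂', ← clearCost₂_bellman hC₂ hμ₁ hμ₂ hkℓ]

end LevelZero

section Diagonal

variable (v : ℕ → ℕ → ℕ → ℝ) (C₁ : ℕ)

noncomputable def diagValue (i j : ℕ) : ℝ := v i j (C₁ - j)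

-- `j - 1` truncates at `j = 0`, where the coefficient `diagProb₁ 0` vanishes.
noncomputable def diagMin (i j : ℕ) : ℝ := min (diagValue v C₁ i j) (diagValue v C₁ i (j - 1))

variable {v C₁} {C₂ : ℕ} {μ₁ μ₂ h₀ h₁ h₂ : ℝ}

theorem IsValue.diagValue_succ (hv : IsValue C₁ C₂ μ₁ μ₂ h₀ h₁ h₂ v) {j : ℕ} (hj : j ≤ C₁)
    (i : ℕ) :
    diagValue v C₁ (i + 1) j =
      (((i : ℝ) + 1) * h₀ + (j : ℝ) * h₁ + ((C₁ - j : ℕ) : ℝ) * h₂) / diagRate C₁ C₂ μ₁ μ₂ j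
      + diagProb₁ C₁ C₂ μ₁ μ₂ j * diagMin v C₁ i j
      + diagProb₂ C₁ C₂ μ₁ μ₂ j * diagMin v C₁ i (j + 1) := by
  rw [diagValue, hv.2.2 i j (C₁ - j) (by omega)]
  rcases j with _ | j
  · simp [diagProb₁, diagProb₂, diagRate, diagMin, diagValue]
  · simp only [diagProb₁, diagProb₂, diagRate, diagMin, diagValue, Nat.add_sub_cancel,
      show C₁ - (j + 1) + 1 = C₁ - j by omega, Nat.sub_sub]

theorem IsValue.zero_min_eq (hv : IsValue C₁ C₂ μ₁ μ₂ h₀ h₁ h₂ v) (hC₂ : 1 ≤ C₂)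
    (hμ₁ : 0 < μ₁) (hμ₂ : 0 < μ₂) {a L : ℕ} (h : a + L + 1 ≤ C₁) :
    min (v 0 (a + 1) L) (v 0 a (L + 1)) =
      v 0 a L + min (h₁ / μ₁) (stageCost₂ C₂ μ₂ h₂ (L + 1)) := by
  rw [hv.zero_eq_clearCost₂ hC₂ hμ₁ hμ₂ (by omega), hv.zero_eq_clearCost₂ hC₂ hμ₁ hμ₂ (by omega),
    hv.zero_eq_clearCost₂ hC₂ hμ₁ hμ₂ (by omega), clearCost₂_succ, ← min_add_add_left]
  push_cast
  congr 1 <;> ring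

theorem IsValue.diagValue_one_sub_zero (hv : IsValue C₁ C₂ μ₁ μ₂ h₀ h₁ h₂ v) (hC₁ : 1 ≤ C₁)
    (hC₂ : 1 ≤ C₂) (hμ₁ : 0 < μ₁) (hμ₂ : 0 < μ₂) {j : ℕ} (hj : j ≤ C₁) :
    diagValue v C₁ 1 j - diagValue v C₁ 0 j =
      h₀ / diagRate C₁ C₂ μ₁ μ₂ j
      + diagProb₁ C₁ C₂ μ₁ μ₂ j * min (h₁ / μ₁) (stageCost₂ C₂ μ₂ h₂ (C₁ + 1 - j))
      + diagProb₂ C₁ C₂ μ₁ μ₂ j * min (h₁ / μ₁) (stageCost₂ C₂ μ₂ h₂ (C₁ - j)) := by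
  have hp : diagProb₁ C₁ C₂ μ₁ μ₂ j * diagMin v C₁ 0 j = diagProb₁ C₁ C₂ μ₁ μ₂ j *
      (v 0 (j - 1) (C₁ - j) + min (h₁ / μ₁) (stageCost₂ C₂ μ₂ h₂ (C₁ + 1 - j))) := by
    rcases j with _ | a
    · simp [diagProb₁]
    · rw [diagMin, diagValue, diagValue, Nat.add_sub_cancel,
        show C₁ - a = C₁ - (a + 1) + 1 by omega,
        hv.zero_min_eq hC₂ hμ₁ hμ₂ (by omega), show C₁ + 1 - (a + 1) = C₁ - (a + 1) + 1 by omega]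
  have hq : diagProb₂ C₁ C₂ μ₁ μ₂ j * diagMin v C₁ 0 (j + 1) = diagProb₂ C₁ C₂ μ₁ μ₂ j *
      (v 0 j (C₁ - j - 1) + min (h₁ / μ₁) (stageCost₂ C₂ μ₂ h₂ (C₁ - j))) := by
    rcases hj.lt_or_eq with hj | rfl
    · rw [diagMin, diagValue, diagValue, Nat.add_sub_cancel,
        show C₁ - j = C₁ - (j + 1) + 1 by omega,
        hv.zero_min_eq hC₂ hμ₁ hμ₂ (by omega), Nat.add_sub_cancel]
    · simp [diagProb₂_self]
  have e₀ := hv.2.1 j (C₁ - j) (by omega) (by omega)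
  rw [hv.diagValue_succ hj, diagValue, e₀, hp, hq]
  simp only [diagProb₁, diagProb₂, diagRate]
  push_cast
  ring

end Diagonal

section Monotonicity

variable {v : ℕ → ℕ → ℕ → ℝ} {C₁ C₂ : ℕ} {μ₁ μ₂ h₀ h₁ h₂ : ℝ}

theorem IsValue.diagValue_succ_sub_succ (hv : IsValue C₁ C₂ μ₁ μ₂ h₀ h₁ h₂ v) {j : ℕ}
    (hj : j ≤ C₁) (i : ℕ) :
    diagValue v C₁ (i + 2) j - diagValue v C₁ (i + 1) j =
      h₀ / diagRate C₁ C₂ μ₁ μ₂ j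
      + diagProb₁ C₁ C₂ μ₁ μ₂ j * (diagMin v C₁ (i + 1) j - diagMin v C₁ i j)
      + diagProb₂ C₁ C₂ μ₁ μ₂ j * (diagMin v C₁ (i + 1) (j + 1) - diagMin v C₁ i (j + 1)) := by
  rw [hv.diagValue_succ hj (i + 1), hv.diagValue_succ hj i]
  push_cast
  ring

theorem diagMin_sub_antitone {i : ℕ}
    (h : ∀ j < C₁, diagValue v C₁ (i + 1) (j + 1) - diagValue v C₁ i (j + 1) ≤
      diagValue v C₁ (i + 1) j - diagValue v C₁ i j) :
    ∀ j < C₁, diagMin v C₁ (i + 1) (j + 1) - diagMin v C₁ i (j + 1) ≤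
      diagMin v C₁ (i + 1) j - diagMin v C₁ i j := by
  intro j hj
  have hprev : diagValue v C₁ (i + 1) j - diagValue v C₁ i j ≤
      diagValue v C₁ (i + 1) (j - 1) - diagValue v C₁ i (j - 1) := by
    rcases j with _ | j
    · exact le_rfl
    · exact h j (by omega)
  exact (min_sub_min_le_sub (h j hj)).trans (sub_le_min_sub_min hprev)

theorem IsValue.diagValue_sub_antitone (hv : IsValue C₁ C₂ μ₁ μ₂ h₀ h₁ h₂ v) (hC₁ : 1 ≤ C₁)
    (hC₂ : 1 ≤ C₂) (hμ₁ : 0 < μ₁) (hμ₂ : 0 < μ₂) (hh₀ : 0 ≤ h₀) (hh₂ : 0 ≤ h₂) (hμ : μ₂ ≤ μ₁)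
    (i : ℕ) :
    ∀ j < C₁, diagValue v C₁ (i + 1) (j + 1) - diagValue v C₁ i (j + 1) ≤
      diagValue v C₁ (i + 1) j - diagValue v C₁ i j := by
  have step := fun i g hg hu =>
    succ_le_of_eq_div_add_combo (g := g)
      (u := fun j => diagValue v C₁ (i + 1) j - diagValue v C₁ i j)
      hh₀ (diagRate_pos hC₁ hC₂ hμ₁ hμ₂) (fun j _ => diagRate_le_succ hμ₁.le hμ j)
      (diagProb₁_nonneg hμ₁.le hμ₂.le) (diagProb₂_nonneg hμ₁.le hμ₂.le)
      (diagProb₁_add_diagProb₂ hC₁ hC₂ hμ₁ hμ₂) diagProb₂_self hg hu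
  induction i with
  | zero =>
    exact step 0 (fun j => min (h₁ / μ₁) (stageCost₂ C₂ μ₂ h₂ (C₁ + 1 - j)))
      (fun j _ => min_le_min le_rfl (stageCost₂_mono hC₂ hμ₂ hh₂ (by omega)))
      (fun j hj => by
        rw [Nat.add_sub_add_right]; exact hv.diagValue_one_sub_zero hC₁ hC₂ hμ₁ hμ₂ hj)
  | succ i ih =>
    exact step (i + 1) (fun j => diagMin v C₁ (i + 1) j - diagMin v C₁ i j)
      (diagMin_sub_antitone ih)
      (fun j hj => hv.diagValue_succ_sub_succ hj i)

end Monotonicity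

section Threshold

open Filter

variable {v : ℕ → ℕ → ℕ → ℝ} {C₁ C₂ : ℕ} {μ₁ μ₂ h₀ h₁ h₂ : ℝ}

theorem IsValue.antitone_diagValue_sub (hv : IsValue C₁ C₂ μ₁ μ₂ h₀ h₁ h₂ v) (hC₁ : 1 ≤ C₁)
    (hC₂ : 1 ≤ C₂) (hμ₁ : 0 < μ₁) (hμ₂ : 0 < μ₂) (hh₀ : 0 ≤ h₀) (hh₂ : 0 ≤ h₂) (hμ : μ₂ ≤ μ₁)
    {j : ℕ} (hj : j < C₁) :
    Antitone fun i => diagValue v C₁ i (j + 1) - diagValue v C₁ i j :=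
  antitone_nat_of_succ_le fun i => by
    linarith [hv.diagValue_sub_antitone hC₁ hC₂ hμ₁ hμ₂ hh₀ hh₂ hμ i j hj]

theorem IsValue.diagValue_succ_sub_le (hv : IsValue C₁ C₂ μ₁ μ₂ h₀ h₁ h₂ v) (hC₁ : 1 ≤ C₁)
    (hC₂ : 1 ≤ C₂) (hμ₁ : 0 < μ₁) (hμ₂ : 0 < μ₂) {i j : ℕ} (hj : j < C₁)
    (hprev : diagValue v C₁ i j ≤ diagValue v C₁ i (j - 1)) :
    diagValue v C₁ (i + 1) (j + 1) - diagValue v C₁ (i + 1) j ≤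
      (((i : ℝ) + 1) * h₀ + ((j + 1 : ℕ) : ℝ) * h₁ + ((C₁ - (j + 1) : ℕ) : ℝ) * h₂)
          / diagRate C₁ C₂ μ₁ μ₂ (j + 1)
      - (((i : ℝ) + 1) * h₀ + (j : ℝ) * h₁ + ((C₁ - j : ℕ) : ℝ) * h₂) / diagRate C₁ C₂ μ₁ μ₂ j
      + max (diagValue v C₁ i (j + 1) - diagValue v C₁ i j) 0 := by
  set D := diagValue v C₁ i (j + 1) - diagValue v C₁ i j
  have hpq := diagProb₁_add_diagProb₂ hC₁ hC₂ hμ₁ hμ₂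
  have hp := diagProb₁_nonneg (C₁ := C₁) (C₂ := C₂) hμ₁.le hμ₂.le
  have hq := diagProb₂_nonneg (C₁ := C₁) (C₂ := C₂) hμ₁.le hμ₂.le
  have hmin_left : diagMin v C₁ i (j + 1) ≤ diagValue v C₁ i (j + 1) := min_le_left _ _
  have hmin_right : diagMin v C₁ i (j + 1 + 1) ≤ diagValue v C₁ i (j + 1) := min_le_right _ _
  have hmin_prev : diagMin v C₁ i j = diagValue v C₁ i j := min_eq_left hprev
  have hmin_cur : diagMin v C₁ i (j + 1) = diagValue v C₁ i j + min D 0 := by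
    rw [diagMin, Nat.add_sub_cancel, ← min_add_add_left, add_sub_cancel, add_zero]
  have hup : diagValue v C₁ (i + 1) (j + 1) ≤
      (((i : ℝ) + 1) * h₀ + ((j + 1 : ℕ) : ℝ) * h₁ + ((C₁ - (j + 1) : ℕ) : ℝ) * h₂)
        / diagRate C₁ C₂ μ₁ μ₂ (j + 1) + diagValue v C₁ i (j + 1) := by
    have h := add_le_add (mul_le_mul_of_nonneg_left hmin_left (hp (j + 1)))
      (mul_le_mul_of_nonneg_left hmin_right (hq (j + 1)))
    rw [← add_mul, hpq, one_mul] at h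
    rw [hv.diagValue_succ (j := j + 1) hj i]
    linarith
  have hlow : (((i : ℝ) + 1) * h₀ + (j : ℝ) * h₁ + ((C₁ - j : ℕ) : ℝ) * h₂)
        / diagRate C₁ C₂ μ₁ μ₂ j + diagValue v C₁ i j + min D 0 ≤ diagValue v C₁ (i + 1) j := by
    have hq_le : min D 0 ≤ diagProb₂ C₁ C₂ μ₁ μ₂ j * min D 0 := by
      nlinarith [min_le_right D 0, hp j, hpq j]
    rw [hv.diagValue_succ hj.le i, hmin_prev, hmin_cur]
    linear_combination hq_le - diagValue v C₁ i j * hpq j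
  linarith [min_add_max D 0]

theorem IsValue.eventually_diagValue_succ_lt (hv : IsValue C₁ C₂ μ₁ μ₂ h₀ h₁ h₂ v)
    (hC₁ : 1 ≤ C₁) (hC₂ : 1 ≤ C₂) (hμ₁ : 0 < μ₁) (hμ₂ : 0 < μ₂) (hh₀ : 0 < h₀) (hh₂ : 0 ≤ h₂)
    (hμ : μ₂ ≤ μ₁) {j : ℕ} (hj : j < C₁)
    (hd : diagRate C₁ C₂ μ₁ μ₂ j < diagRate C₁ C₂ μ₁ μ₂ (j + 1))
    (hprev : ∀ᶠ i in atTop, diagValue v C₁ i j ≤ diagValue v C₁ i (j - 1)) :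
    ∀ᶠ i in atTop, diagValue v C₁ i (j + 1) < diagValue v C₁ i j := by
  set D := fun i => diagValue v C₁ i (j + 1) - diagValue v C₁ i j
  have hanti : Antitone D := hv.antitone_diagValue_sub hC₁ hC₂ hμ₁ hμ₂ hh₀.le hh₂ hμ hj
  have hd₀ := diagRate_pos hC₁ hC₂ hμ₁ hμ₂ j
  set δ := h₀ * (1 / diagRate C₁ C₂ μ₁ μ₂ j - 1 / diagRate C₁ C₂ μ₁ μ₂ (j + 1))
  have hδ : 0 < δ := mul_pos hh₀ (sub_pos.2 (one_div_lt_one_div_of_lt hd₀ hd))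
  set K := (((j + 1 : ℕ) : ℝ) * h₁ + ((C₁ - (j + 1) : ℕ) : ℝ) * h₂) / diagRate C₁ C₂ μ₁ μ₂ (j + 1)
    - ((j : ℝ) * h₁ + ((C₁ - j : ℕ) : ℝ) * h₂) / diagRate C₁ C₂ μ₁ μ₂ j + max (D 0) 0
  -- the holding cost `(i + 1) h₀` of the waiting jobs accrues over an epoch of mean length
  -- `1 / d`, which is shorter by `δ / h₀` in state `j + 1`: the advantage grows linearly in `i`
  have hbound : ∀ᶠ i in atTop, D (i + 1) ≤ K + (-δ) * ((i : ℝ) + 1) :=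
    hprev.mono fun i hi => by
      have hmax : max (D i) 0 ≤ max (D 0) 0 := max_le_max (hanti (Nat.zero_le i)) le_rfl
      calc D (i + 1) ≤ _ := hv.diagValue_succ_sub_le hC₁ hC₂ hμ₁ hμ₂ hj hi
        _ ≤ _ := add_le_add_right hmax _
        _ = K + (-δ) * ((i : ℝ) + 1) := by simp only [K, δ]; ring
  have hlim : Tendsto (fun i : ℕ => K + (-δ) * ((i : ℝ) + 1)) atTop atBot :=
    tendsto_atBot_add_const_left _ K <|
      (tendsto_atTop_add_const_right _ 1 tendsto_natCast_atTop_atTop).const_mul_atTop_of_neg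
        (neg_lt_zero.2 hδ)
  obtain ⟨i₀, hi₀⟩ := (hbound.and (hlim.eventually (eventually_lt_atBot 0))).exists
  refine eventually_atTop.2 ⟨i₀ + 1, fun i hi => ?_⟩
  have : D i < 0 := (hanti hi).trans_lt (hi₀.1.trans_lt hi₀.2)
  simpa [D] using this

theorem IsValue.eventually_diagValue_succ_lt_of_lt (hv : IsValue C₁ C₂ μ₁ μ₂ h₀ h₁ h₂ v)
    (hC₂ : 1 ≤ C₂) (hμ₁ : 0 < μ₁) (hμ₂ : 0 < μ₂) (hh₀ : 0 < h₀) (hh₂ : 0 ≤ h₂) (hμ : μ₂ ≤ μ₁)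
    {k : ℕ} (hk : k ≤ C₁)
    (hd : ∀ j < k, diagRate C₁ C₂ μ₁ μ₂ j < diagRate C₁ C₂ μ₁ μ₂ (j + 1)) :
    ∀ j < k, ∀ᶠ i in atTop, diagValue v C₁ i (j + 1) < diagValue v C₁ i j := by
  intro j hj
  induction j with
  | zero =>
    exact hv.eventually_diagValue_succ_lt (by omega) hC₂ hμ₁ hμ₂ hh₀ hh₂ hμ (by omega) (hd 0 hj)
      (Eventually.of_forall fun _ => le_rfl)
  | succ j ih =>
    exact hv.eventually_diagValue_succ_lt (by omega) hC₂ hμ₁ hμ₂ hh₀ hh₂ hμ (by omega) (hd _ hj)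
      ((ih (by omega)).mono fun _ hi => hi.le)

end Threshold

theorem stmt1_general
    (C₁ C₂ : ℕ) (hC₂pos : 1 ≤ C₂)
    (μ₁ μ₂ h₀ h₁ h₂ : ℝ)
    (hμ₁ : 0 < μ₁) (hμ₂ : 0 < μ₂)
    (hh₀ : 0 < h₀) (hh₂ : 0 < h₂)
    (v : ℕ → ℕ → ℕ → ℝ) (hv : IsValue C₁ C₂ μ₁ μ₂ h₀ h₁ h₂ v)
    (hμ : μ₂ ≤ μ₁)
    (k ℓ : ℕ) (hkl : k + ℓ = C₁) (hk : 1 ≤ k)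
    (hcase : C₂ ≤ ℓ ∨ (μ₂ < μ₁ ∧ ℓ < C₂)) :
    ∃ N : ℕ, (∀ i : ℕ, Dv v i k ℓ ≤ 0 ↔ N ≤ i) ∧
      ∃ I : ℕ, ∀ i : ℕ, I ≤ i → Dv v i k ℓ < 0 := by
  obtain ⟨j, rfl⟩ : ∃ j, k = j + 1 := ⟨k - 1, by omega⟩
  obtain rfl : ℓ = C₁ - (j + 1) := by omega
  have hD : ∀ i, Dv v i (j + 1) (C₁ - (j + 1)) = diagValue v C₁ i (j + 1) - diagValue v C₁ i j := by
    intro i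
    rw [Dv, diagValue, diagValue, Nat.add_sub_cancel, show C₁ - (j + 1) + 1 = C₁ - j by omega]
  have hanti := hv.antitone_diagValue_sub (by omega) hC₂pos hμ₁ hμ₂ hh₀.le hh₂.le hμ (j := j)
    (by omega)
  have hneg := hv.eventually_diagValue_succ_lt_of_lt (k := j + 1) hC₂pos hμ₁ hμ₂ hh₀ hh₂.le hμ
    (by omega) (fun i hi => diagRate_lt_succ hμ₁ (hcase.imp (fun _ => by omega) And.left)) j
    (by omega)
  obtain ⟨N, hN⟩ := exists_forall_iff_le_of_monotone
    (P := fun i => diagValue v C₁ i (j + 1) - diagValue v C₁ i j ≤ 0)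
    (fun a b hab h => (hanti hab).trans h) (hneg.exists.imp fun i hi => by linarith)
  obtain ⟨I, hI⟩ := Filter.eventually_atTop.1 hneg
  exact ⟨N, fun i => hD i ▸ hN i, I, fun i hi => by linarith [hD i, hI i hi]⟩

theorem stmt1
    (C₁ C₂ : ℕ) (hC₂pos : 1 ≤ C₂) (hC : C₂ < C₁)
    (μ₁ μ₂ h₀ h₁ h₂ : ℝ)
    (hμ₁ : 0 < μ₁) (hμ₂ : 0 < μ₂)
    (hh₀ : 0 < h₀) (hh₁ : 0 < h₁) (hh₂ : 0 < h₂)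
    (v : ℕ → ℕ → ℕ → ℝ) (hv : IsValue C₁ C₂ μ₁ μ₂ h₀ h₁ h₂ v)
    (hμ : μ₂ ≤ μ₁)
    (k ℓ : ℕ) (hkl : k + ℓ = C₁) (hk : 1 ≤ k)
    (hcase : C₂ ≤ ℓ ∨ (μ₂ < μ₁ ∧ ℓ < C₂)) :
    ∃ N : ℕ, (∀ i : ℕ, Dv v i k ℓ ≤ 0 ↔ N ≤ i) ∧
      ∃ I : ℕ, ∀ i : ℕ, I ≤ i → Dv v i k ℓ < 0 :=
  stmt1_general C₁ C₂ hC₂pos μ₁ μ₂ h₀ h₁ h₂ hμ₁ hμ₂ hh₀ hh₂ v hv hμ k ℓ hkl hk hcase
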